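/- arXiv:2003.06166 — 5 statements merged into one kernel-verified Lean document; each statement's English description precedes it below -/
import Mathlib

section
/- If G is a simple graph with minimum degree δ(G) ≥ 1, then μ_int(G) ≤ 2·⌈Δ(G)/δ(G)⌉, where Δ(G) and δ(G) are the maximum and minimum degrees of G. -/
/-!
Orient `G` so that in- and out-degree differ by at most one at every vertex (induction on the
edges, the removed edge being chosen by a parity argument). Viewing tails and heads as two copies
of `V` turns `G` into a bipartite multigraph, and bipartite multigraphs have equitable edge
colourings (de Werra): a colouring minimising the sum of the squared colour degrees is equitable,
since the edges of any two colours can be recoloured along a balanced orientation of their union.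
With `k = ⌈δ/2⌉` colours, one side of each vertex has at least `⌈δ/2⌉ = k` edges, so every colour
occurs at the vertex, and each side has at most `⌈Δ/2⌉ ≤ k⌈Δ/δ⌉` edges, so every colour occurs at
most `⌈Δ/δ⌉` times per side.
-/

open SimpleGraph

/-- The set ("spectrum") of colors appearing on edges incident to vertex `v`
under the edge coloring `c`. -/
def SimpleGraph.colorSpectrum {V : Type*} (G : SimpleGraph V) (c : Sym2 V → ℕ) (v : V) :
    Set ℕ :=
  {n | ∃ w, G.Adj v w ∧ c s(v, w) = n}

/-- A set of natural numbers is an interval of consecutive integers. -/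
def IsIntervalSet (S : Set ℕ) : Prop :=
  ∀ a ∈ S, ∀ b ∈ S, ∀ x, a ≤ x → x ≤ b → x ∈ S

/-- `c` is a `k`-improper interval edge coloring of `G`: at most `k` edges with a common
endpoint share a color, and the colors at each vertex form an interval. -/
def SimpleGraph.IsImproperIntervalColoring {V : Type*} (G : SimpleGraph V)
    (c : Sym2 V → ℕ) (k : ℕ) : Prop :=
  (∀ v n, {w | G.Adj v w ∧ c s(v, w) = n}.ncard ≤ k) ∧
    ∀ v, IsIntervalSet (G.colorSpectrum c v)

/-- The interval coloring impropriety of `G`: the least `k` such that `G` has a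
`k`-improper interval edge coloring. -/
noncomputable def SimpleGraph.muInt {V : Type*} (G : SimpleGraph V) : ℕ :=
  sInf {k | ∃ c : Sym2 V → ℕ, G.IsImproperIntervalColoring c k}

open Finset Function

namespace IntervalColoring

section Orientation

variable {ι W : Type*} {ends : ι → Sym2 W} {A : Finset ι}
  {tail head : ι → W} {e₀ : ι}

def IsOrientation (ends : ι → Sym2 W) (A : Finset ι) (tail head : ι → W) : Prop :=
  ∀ e ∈ A, s(tail e, head e) = ends e

def IsBalancedOn [DecidableEq W] (tail head : ι → W) (A : Finset ι) : Prop :=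
  ∀ v, #{e ∈ A | tail e = v} ≤ #{e ∈ A | head e = v} + 1 ∧
    #{e ∈ A | head e = v} ≤ #{e ∈ A | tail e = v} + 1

lemma IsOrientation.card_tail_add_card_head [DecidableEq ι] [DecidableEq W]
    (horient : IsOrientation ends A tail head)
    (hloop : ∀ e ∈ A, ¬(ends e).IsDiag) (v : W) :
    #{e ∈ A | tail e = v} + #{e ∈ A | head e = v} = #{e ∈ A | v ∈ ends e} := by
  rw [← card_union_of_disjoint, ← filter_or]
  · refine congrArg card (filter_congr fun e he => ?_)
    rw [← horient e he, Sym2.mem_iff]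
    exact or_congr eq_comm eq_comm
  · rw [disjoint_filter]
    rintro e he rfl hv
    exact hloop e he (horient e he ▸ Sym2.mk_isDiag_iff.2 hv.symm)

lemma IsBalancedOn.card_tail_eq_card_head [DecidableEq W] (hbal : IsBalancedOn tail head A) {v : W}
    (heven : Even (#{e ∈ A | tail e = v} + #{e ∈ A | head e = v})) :
    #{e ∈ A | tail e = v} = #{e ∈ A | head e = v} := by
  obtain ⟨n, hn⟩ := heven
  have := hbal v
  omega

lemma card_filter_insert_update [DecidableEq ι] [DecidableEq W] (he₀ : e₀ ∉ A) (f : ι → W)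
    (x v : W) :
    #{e ∈ insert e₀ A | update f e₀ x e = v} = #{e ∈ A | f e = v} + if x = v then 1 else 0 := by
  have hA : {e ∈ A | update f e₀ x e = v} = {e ∈ A | f e = v} :=
    filter_congr fun e he => by rw [update_of_ne (ne_of_mem_of_not_mem he he₀)]
  rw [filter_insert, update_self, hA]
  split_ifs
  · exact card_insert_of_notMem (by simp [he₀])
  · rfl

lemma IsOrientation.insert_update [DecidableEq ι] (horient : IsOrientation ends A tail head)
    (he₀ : e₀ ∉ A) {x y : W} (hxy : s(x, y) = ends e₀) :
    IsOrientation ends (insert e₀ A) (update tail e₀ x) (update head e₀ y) := by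
  intro e he
  rcases mem_insert.1 he with rfl | he
  · simpa using hxy
  · have hne := ne_of_mem_of_not_mem he he₀
    rw [update_of_ne hne, update_of_ne hne]
    exact horient e he

lemma IsBalancedOn.insert_update [DecidableEq ι] [DecidableEq W] (hbal : IsBalancedOn tail head A)
    (he₀ : e₀ ∉ A) {x y : W} (hxy : x ≠ y) (hx : #{e ∈ A | tail e = x} ≤ #{e ∈ A | head e = x})
    (hy : #{e ∈ A | head e = y} ≤ #{e ∈ A | tail e = y}) :
    IsBalancedOn (update tail e₀ x) (update head e₀ y) (insert e₀ A) := by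
  intro v
  rw [card_filter_insert_update he₀, card_filter_insert_update he₀]
  have := hbal v
  split_ifs <;> subst_vars <;> omega

lemma exists_orientation_insert [DecidableEq ι] [DecidableEq W]
    (horient : IsOrientation ends A tail head) (hbal : IsBalancedOn tail head A) (he₀ : e₀ ∉ A)
    {p q : W} (hpq : ends e₀ = s(p, q)) (hne : p ≠ q)
    (hp : #{e ∈ A | tail e = p} = #{e ∈ A | head e = p} ∨
      #{e ∈ A | tail e = p} + #{e ∈ A | tail e = q} =
        #{e ∈ A | head e = p} + #{e ∈ A | head e = q}) :
    ∃ tail' head', IsOrientation ends (insert e₀ A) tail' head' ∧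
      IsBalancedOn tail' head' (insert e₀ A) := by
  have := hbal p
  have := hbal q
  by_cases h : #{e ∈ A | tail e = p} ≤ #{e ∈ A | head e = p} ∧
      #{e ∈ A | head e = q} ≤ #{e ∈ A | tail e = q}
  · exact ⟨_, _, horient.insert_update he₀ hpq.symm, hbal.insert_update he₀ hne h.1 h.2⟩
  · exact ⟨_, _, horient.insert_update he₀ (Sym2.eq_swap.trans hpq.symm),
      hbal.insert_update he₀ hne.symm (by omega) (by omega)⟩

lemma card_filter_erase_add_one [DecidableEq ι] {P : ι → Prop} [DecidablePred P] (he₀ : e₀ ∈ A)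
    (hP : P e₀) : #{e ∈ A.erase e₀ | P e} + 1 = #{e ∈ A | P e} := by
  rw [filter_erase]
  exact card_erase_add_one (mem_filter.2 ⟨he₀, hP⟩)

theorem exists_isBalancedOn [DecidableEq ι] [Fintype W] [DecidableEq W] (ends : ι → Sym2 W)
    (A : Finset ι) (hloop : ∀ e ∈ A, ¬(ends e).IsDiag) :
    ∃ tail head, IsOrientation ends A tail head ∧ IsBalancedOn tail head A := by
  induction A using Finset.strongInduction with
  | H A ih =>
  rcases A.eq_empty_or_nonempty with rfl | ⟨e₁, he₁⟩
  · exact ⟨fun e => (Quot.out (ends e)).1, fun e => (Quot.out (ends e)).2, by simp [IsOrientation],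
      by simp [IsBalancedOn]⟩
  have ih' : ∀ e₀ ∈ A, ∃ tail head, IsOrientation ends (A.erase e₀) tail head ∧
      IsBalancedOn tail head (A.erase e₀) := fun e₀ he₀ =>
    ih _ (erase_ssubset he₀) fun e he => hloop e (mem_of_mem_erase he)
  have hloop' : ∀ e₀, ∀ e ∈ A.erase e₀, ¬(ends e).IsDiag :=
    fun e₀ e he => hloop e (mem_of_mem_erase he)
  by_cases hodd : ∃ e₀ ∈ A, ∃ p ∈ ends e₀, Odd #{e ∈ A | p ∈ ends e}
  · -- removing an edge at a vertex `p` of odd degree leaves `p` balanced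
    obtain ⟨e₀, he₀, p, hp, hodd⟩ := hodd
    obtain ⟨q, hpq⟩ := Sym2.mem_iff_exists.1 hp
    obtain ⟨tail, head, horient, hbal⟩ := ih' e₀ he₀
    rw [← insert_erase he₀]
    refine exists_orientation_insert horient hbal (notMem_erase e₀ A) hpq
      (fun h => hloop e₀ he₀ (hpq ▸ Sym2.mk_isDiag_iff.2 h))
      (Or.inl (hbal.card_tail_eq_card_head ?_))
    rw [horient.card_tail_add_card_head (hloop' e₀) p]
    have := card_filter_erase_add_one (P := fun e => p ∈ ends e) he₀ hp
    obtain ⟨n, hn⟩ := hodd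
    exact ⟨n, by omega⟩
  · -- all degrees are even, so after removing `e₁ = s(p, q)` only `p` and `q` can be
    -- unbalanced, and their imbalances cancel since in- and out-degrees have the same sum
    obtain ⟨p, q, hpq⟩ : ∃ p q, ends e₁ = s(p, q) := ⟨_, _, (Quot.out_eq (ends e₁)).symm⟩
    have hne : p ≠ q := fun h => hloop e₁ he₁ (hpq ▸ Sym2.mk_isDiag_iff.2 h)
    obtain ⟨tail, head, horient, hbal⟩ := ih' e₁ he₁
    rw [← insert_erase he₁]
    refine exists_orientation_insert horient hbal (notMem_erase e₁ A) hpq hne (Or.inr ?_)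
    have hzero : ∀ v, v ≠ p ∧ v ≠ q →
        (#{e ∈ A.erase e₁ | tail e = v} : ℤ) - #{e ∈ A.erase e₁ | head e = v} = 0 := by
      intro v hv
      have hv₁ : v ∉ ends e₁ := by rw [hpq, Sym2.mem_iff]; tauto
      rw [hbal.card_tail_eq_card_head ?_, sub_self]
      rw [horient.card_tail_add_card_head (hloop' e₁), filter_erase,
        erase_eq_of_notMem (by simp [hv₁]), ← Nat.not_odd_iff_even]
      intro hv_odd
      obtain ⟨e, he⟩ := card_pos.1 hv_odd.pos
      exact hodd ⟨e, (mem_filter.1 he).1, v, (mem_filter.1 he).2, hv_odd⟩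
    have hsum := Fintype.sum_eq_add p q hne hzero
    have htail : ∑ v, #{e ∈ A.erase e₁ | tail e = v} = #(A.erase e₁) :=
      (card_eq_sum_card_fiberwise fun e _ => mem_univ (tail e)).symm
    have hhead : ∑ v, #{e ∈ A.erase e₁ | head e = v} = #(A.erase e₁) :=
      (card_eq_sum_card_fiberwise fun e _ => mem_univ (head e)).symm
    rw [sum_sub_distrib, ← Nat.cast_sum, ← Nat.cast_sum, htail, hhead, sub_self] at hsum
    omega

end Orientation

lemma sq_add_sq_le_of_balanced {a b a' b' : ℕ} (hsum : a' + b' = a + b) (h₁ : a' ≤ b' + 1)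
    (h₂ : b' ≤ a' + 1) : a' ^ 2 + b' ^ 2 ≤ a ^ 2 + b ^ 2 := by
  -- `a' - b' ∈ {-1, 0, 1}` has the parity of `a - b`
  rcases (by omega : a' = b' ∨ a' = b' + 1 ∨ b' = a' + 1) with h | h | h
  · subst h
    nlinarith [sq_nonneg ((a : ℤ) - b)]
  all_goals
    rcases (by omega : b + 1 ≤ a ∨ a + 1 ≤ b) with h' | h' <;> subst h <;> nlinarith

lemma sq_add_sq_lt_of_balanced {a b a' b' : ℕ} (hsum : a' + b' = a + b) (h₁ : a' ≤ b' + 1)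
    (h₂ : b' ≤ a' + 1) (hab : b + 2 ≤ a) : a' ^ 2 + b' ^ 2 < a ^ 2 + b ^ 2 := by
  nlinarith

lemma sum_add_eq_sum_add_of_eq_off_pair {κ : Type*} [Fintype κ] {F G : κ → ℕ} {i j : κ}
    (hij : i ≠ j) (h : ∀ m, m ≠ i → m ≠ j → F m = G m) :
    ∑ m, F m + (G i + G j) = ∑ m, G m + (F i + F j) := by
  have := Fintype.sum_eq_add (f := fun m => (F m : ℤ) - G m) i j hij
    fun m hm => by simp [h m hm.1 hm.2]
  rw [sum_sub_distrib] at this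
  zify
  linarith

section Equitable

variable {ι κ X L R : Type*} [DecidableEq κ] [DecidableEq X]

def IsEquitableOn (f : ι → X) (c : ι → κ) (A : Finset ι) : Prop :=
  ∀ x i j, #{e ∈ A | f e = x ∧ c e = i} ≤ #{e ∈ A | f e = x ∧ c e = j} + 1

lemma isEquitableOn_bool_of_card {f : ι → X} {b : ι → Bool} {A : Finset ι} (P Q : X → ℕ)
    (hP : ∀ x, #{e ∈ A | f e = x ∧ b e = true} = P x)
    (hQ : ∀ x, #{e ∈ A | f e = x ∧ b e = false} = Q x)
    (hPQ : ∀ x, P x ≤ Q x + 1 ∧ Q x ≤ P x + 1) : IsEquitableOn f b A := by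
  intro x i j
  have := hPQ x
  cases i <;> cases j <;> simp only [hP, hQ] <;> omega

/-- Colour each edge by its direction in a balanced orientation. -/
theorem exists_bool_isEquitableOn [DecidableEq ι] [Fintype L] [DecidableEq L] [Fintype R]
    [DecidableEq R] (l : ι → L) (r : ι → R) (A : Finset ι) :
    ∃ b : ι → Bool, IsEquitableOn l b A ∧ IsEquitableOn r b A := by
  obtain ⟨tail, head, horient, hbal⟩ :=
    exists_isBalancedOn (fun e => s(Sum.inl (l e), Sum.inr (r e))) A fun e _ => by simp
  have hends : ∀ e ∈ A, tail e = .inl (l e) ∧ head e = .inr (r e) ∨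
      tail e = .inr (r e) ∧ head e = .inl (l e) := fun e he => Sym2.eq_iff.1 (horient e he)
  refine ⟨fun e => tail e = .inl (l e),
    isEquitableOn_bool_of_card (fun u => #{e ∈ A | tail e = .inl u})
      (fun u => #{e ∈ A | head e = .inl u}) ?_ ?_ fun u => hbal (.inl u),
    isEquitableOn_bool_of_card (fun w => #{e ∈ A | head e = .inr w})
      (fun w => #{e ∈ A | tail e = .inr w}) ?_ ?_ fun w => (hbal (.inr w)).symm⟩
  all_goals
    intro x
    refine congrArg card (filter_congr fun e he => ?_)
    rcases hends e he with ⟨h₁, h₂⟩ | ⟨h₁, h₂⟩ <;> simp [h₁, h₂, eq_comm]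

def recolorPair (c : ι → κ) (i j : κ) (b : ι → Bool) : ι → κ :=
  fun e => if c e = i ∨ c e = j then (if b e then i else j) else c e

def colorEnergy [Fintype X] [Fintype κ] (f : ι → X) (c : ι → κ) (A : Finset ι) : ℕ :=
  ∑ x, ∑ i, #{e ∈ A | f e = x ∧ c e = i} ^ 2

section Recolor

variable {f : ι → X} {c : ι → κ} {A : Finset ι} {i j : κ} {b : ι → Bool}

lemma card_recolorPair_of_ne {m : κ} (hi : m ≠ i) (hj : m ≠ j) (x : X) :
    #{e ∈ A | f e = x ∧ recolorPair c i j b e = m} = #{e ∈ A | f e = x ∧ c e = m} := by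
  refine congrArg card (filter_congr fun e _ => ?_)
  unfold recolorPair
  split_ifs <;> grind

lemma card_recolorPair_left (hij : i ≠ j) (x : X) :
    #{e ∈ A | f e = x ∧ recolorPair c i j b e = i} =
      #{e ∈ {e ∈ A | c e = i ∨ c e = j} | f e = x ∧ b e = true} := by
  rw [filter_filter]
  refine congrArg card (filter_congr fun e _ => ?_)
  unfold recolorPair
  split_ifs <;> grind

lemma card_recolorPair_right (hij : i ≠ j) (x : X) :
    #{e ∈ A | f e = x ∧ recolorPair c i j b e = j} =
      #{e ∈ {e ∈ A | c e = i ∨ c e = j} | f e = x ∧ b e = false} := by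
  rw [filter_filter]
  refine congrArg card (filter_congr fun e _ => ?_)
  unfold recolorPair
  split_ifs <;> grind

lemma card_recolorPair_add (x : X) :
    #{e ∈ A | f e = x ∧ recolorPair c i j b e = i} +
        #{e ∈ A | f e = x ∧ recolorPair c i j b e = j} =
      #{e ∈ A | f e = x ∧ c e = i} + #{e ∈ A | f e = x ∧ c e = j} := by
  simp only [card_filter, ← sum_add_distrib]
  refine sum_congr rfl fun e _ => ?_
  unfold recolorPair
  split_ifs <;> grind

lemma sum_sq_recolorPair_le [Fintype κ] (hij : i ≠ j)
    (hb : IsEquitableOn f b {e ∈ A | c e = i ∨ c e = j}) (x : X) :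
    ∑ m, #{e ∈ A | f e = x ∧ recolorPair c i j b e = m} ^ 2 ≤
        ∑ m, #{e ∈ A | f e = x ∧ c e = m} ^ 2 ∧
      (#{e ∈ A | f e = x ∧ c e = j} + 2 ≤ #{e ∈ A | f e = x ∧ c e = i} →
        ∑ m, #{e ∈ A | f e = x ∧ recolorPair c i j b e = m} ^ 2 <
          ∑ m, #{e ∈ A | f e = x ∧ c e = m} ^ 2) := by
  have hsum := sum_add_eq_sum_add_of_eq_off_pair hij
    (F := fun m => #{e ∈ A | f e = x ∧ recolorPair c i j b e = m} ^ 2)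
    (G := fun m => #{e ∈ A | f e = x ∧ c e = m} ^ 2)
    fun m hi hj => by rw [card_recolorPair_of_ne hi hj]
  have hpair := card_recolorPair_add (f := f) (c := c) (A := A) (i := i) (j := j) (b := b) x
  have h₁ := hb x true false
  have h₂ := hb x false true
  rw [← card_recolorPair_left hij, ← card_recolorPair_right hij] at h₁ h₂
  refine ⟨?_, fun hx => ?_⟩
  · have := sq_add_sq_le_of_balanced hpair h₁ h₂
    omega
  · have := sq_add_sq_lt_of_balanced hpair h₁ h₂ hx
    omega

lemma colorEnergy_recolorPair_le [Fintype X] [Fintype κ] (hij : i ≠ j)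
    (hb : IsEquitableOn f b {e ∈ A | c e = i ∨ c e = j}) :
    colorEnergy f (recolorPair c i j b) A ≤ colorEnergy f c A :=
  sum_le_sum fun x _ => (sum_sq_recolorPair_le hij hb x).1

lemma colorEnergy_recolorPair_lt [Fintype X] [Fintype κ] (hij : i ≠ j)
    (hb : IsEquitableOn f b {e ∈ A | c e = i ∨ c e = j}) {x : X}
    (hx : #{e ∈ A | f e = x ∧ c e = j} + 2 ≤ #{e ∈ A | f e = x ∧ c e = i}) :
    colorEnergy f (recolorPair c i j b) A < colorEnergy f c A :=
  sum_lt_sum (fun y _ => (sum_sq_recolorPair_le hij hb y).1)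
    ⟨x, mem_univ x, (sum_sq_recolorPair_le hij hb x).2 hx⟩

end Recolor

lemma exists_colorEnergy_lt [DecidableEq ι] [Fintype L] [DecidableEq L] [Fintype R]
    [DecidableEq R] [Fintype κ] (l : ι → L) (r : ι → R) {c : ι → κ} {A : Finset ι}
    (hc : ¬IsEquitableOn l c A) :
    ∃ c' : ι → κ, colorEnergy l c' A < colorEnergy l c A ∧
      colorEnergy r c' A ≤ colorEnergy r c A := by
  simp only [IsEquitableOn, not_forall, not_le] at hc
  obtain ⟨x, i, j, hx⟩ := hc
  have hij : i ≠ j := by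
    rintro rfl
    omega
  obtain ⟨b, hbl, hbr⟩ := exists_bool_isEquitableOn l r {e ∈ A | c e = i ∨ c e = j}
  exact ⟨recolorPair c i j b, colorEnergy_recolorPair_lt hij hbl (x := x) (by omega),
    colorEnergy_recolorPair_le hij hbr⟩

/-- de Werra: an edge colouring of minimal energy is equitable. -/
theorem exists_isEquitableOn_bipartite [DecidableEq ι] [Fintype L] [DecidableEq L] [Fintype R]
    [DecidableEq R] [Fintype κ] [Nonempty κ] (l : ι → L) (r : ι → R) (A : Finset ι) :
    ∃ c : ι → κ, IsEquitableOn l c A ∧ IsEquitableOn r c A := by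
  let energy := fun c : ι → κ => colorEnergy l c A + colorEnergy r c A
  refine ⟨argmin energy, ?_⟩
  by_contra h
  obtain ⟨c, hc⟩ : ∃ c, energy c < energy (argmin energy) := by
    rcases not_and_or.1 h with h | h
    · obtain ⟨c, hl, hr⟩ := exists_colorEnergy_lt l r h
      exact ⟨c, add_lt_add_of_lt_of_le hl hr⟩
    · obtain ⟨c, hr, hl⟩ := exists_colorEnergy_lt r l h
      exact ⟨c, add_lt_add_of_le_of_lt hl hr⟩
  exact (argmin_le energy c).not_gt hc

lemma sum_card_filter_color [Fintype κ] (f : ι → X) (c : ι → κ) (A : Finset ι) (x : X) :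
    ∑ i, #{e ∈ A | f e = x ∧ c e = i} = #{e ∈ A | f e = x} := by
  rw [card_eq_sum_card_fiberwise (f := c) (t := univ) fun e _ => mem_univ _]
  simp only [filter_filter]

lemma IsEquitableOn.card_le [Fintype κ] {f : ι → X} {c : ι → κ} {A : Finset ι}
    (hc : IsEquitableOn f c A) {x : X} {m : ℕ} (hx : #{e ∈ A | f e = x} ≤ Fintype.card κ * m)
    (i : κ) : #{e ∈ A | f e = x ∧ c e = i} ≤ m := by
  by_contra! hi
  have : ∑ _j : κ, m < ∑ j, #{e ∈ A | f e = x ∧ c e = j} :=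
    sum_lt_sum (fun j _ => by have := hc x i j; omega) ⟨i, mem_univ i, hi⟩
  rw [sum_const, card_univ, smul_eq_mul, sum_card_filter_color] at this
  omega

lemma IsEquitableOn.exists_color [Fintype κ] {f : ι → X} {c : ι → κ} {A : Finset ι}
    (hc : IsEquitableOn f c A) {x : X} (hx : Fintype.card κ ≤ #{e ∈ A | f e = x}) (i : κ) :
    ∃ e ∈ A, f e = x ∧ c e = i := by
  by_contra! hi
  have h₀ : #{e ∈ A | f e = x ∧ c e = i} = 0 :=
    card_eq_zero.2 (filter_eq_empty_iff.2 fun e he h => hi e he h.1 h.2)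
  have : ∑ j, #{e ∈ A | f e = x ∧ c e = j} < ∑ _j : κ, 1 :=
    sum_lt_sum (fun j _ => by have := hc x j i; omega) ⟨i, mem_univ i, by omega⟩
  rw [sum_const, card_univ, smul_eq_mul, mul_one, sum_card_filter_color] at this
  omega

end Equitable

section Graph

variable {V : Type*} [Fintype V] {G : SimpleGraph V} [DecidableRel G.Adj]
  {tail head : Sym2 V → V}

lemma card_tail_add_card_head_eq_degree [DecidableEq V]
    (horient : IsOrientation id G.edgeFinset tail head) (v : V) :
    #{e ∈ G.edgeFinset | tail e = v} + #{e ∈ G.edgeFinset | head e = v} = G.degree v := by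
  rw [horient.card_tail_add_card_head (fun e he => G.not_isDiag_of_mem_edgeSet
    (mem_edgeFinset.1 he))]
  simp only [id_eq]
  rw [← incidenceFinset_eq_filter, card_incidenceFinset_eq_degree]

lemma ncard_adj_color_le [DecidableEq V] {k m : ℕ} {c : Sym2 V → Fin k}
    (horient : IsOrientation id G.edgeFinset tail head)
    (htail : ∀ v i, #{e ∈ G.edgeFinset | tail e = v ∧ c e = i} ≤ m)
    (hhead : ∀ v i, #{e ∈ G.edgeFinset | head e = v ∧ c e = i} ≤ m) (v : V) (n : ℕ) :
    {w | G.Adj v w ∧ (c s(v, w) : ℕ) = n}.ncard ≤ 2 * m := by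
  rcases lt_or_ge n k with hn | hn
  · let i : Fin k := ⟨n, hn⟩
    calc {w | G.Adj v w ∧ (c s(v, w) : ℕ) = n}.ncard
        ≤ (↑{e ∈ G.edgeFinset | (tail e = v ∨ head e = v) ∧ c e = i} : Set (Sym2 V)).ncard := by
          refine Set.ncard_le_ncard_of_injOn (fun w => s(v, w)) (fun w ⟨hvw, hw⟩ => ?_)
            (fun w _ w' _ h => Sym2.congr_right.1 h)
          have he : s(v, w) ∈ G.edgeFinset := mem_edgeFinset.2 hvw
          have hends := Sym2.eq_iff.1 (horient _ he)
          simp only [coe_filter, Set.mem_ofPred_eq]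
          exact ⟨he, by tauto, Fin.ext hw⟩
      _ ≤ #{e ∈ G.edgeFinset | tail e = v ∧ c e = i} +
            #{e ∈ G.edgeFinset | head e = v ∧ c e = i} := by
          rw [Set.ncard_coe_finset]
          simp only [or_and_right, filter_or]
          exact card_union_le _ _
      _ ≤ 2 * m := by
          have := htail v i
          have := hhead v i
          omega
  · have hempty : {w | G.Adj v w ∧ (c s(v, w) : ℕ) = n} = ∅ :=
      Set.eq_empty_of_forall_notMem fun w ⟨_, hw⟩ => by
        have := (c s(v, w)).isLt
        omega
    rw [hempty, Set.ncard_empty]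
    exact Nat.zero_le _

lemma colorSpectrum_eq_Iio {k : ℕ} {c : Sym2 V → Fin k}
    (horient : IsOrientation id G.edgeFinset tail head)
    (hall : ∀ v i, ∃ e ∈ G.edgeFinset, (tail e = v ∨ head e = v) ∧ c e = i) (v : V) :
    G.colorSpectrum (fun e => c e) v = Set.Iio k := by
  ext n
  refine ⟨fun ⟨w, _, hw⟩ => hw ▸ (c s(v, w)).isLt, fun hn => ?_⟩
  obtain ⟨e, he, hv, hc⟩ := hall v ⟨n, hn⟩
  have hends : s(tail e, head e) = e := horient e he
  rw [← hends, mem_edgeFinset, mem_edgeSet] at he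
  rcases hv with rfl | rfl
  · exact ⟨head e, he, by simp [hends, hc]⟩
  · exact ⟨tail e, he.symm, by simp [Sym2.eq_swap, hends, hc]⟩

theorem exists_isImproperIntervalColoring [DecidableEq V] {k m : ℕ} (hk : 0 < k)
    (hlow : ∀ v, 2 * k ≤ G.degree v + 1) (hhigh : ∀ v, G.degree v ≤ 2 * (k * m)) :
    ∃ c, G.IsImproperIntervalColoring c (2 * m) := by
  have : Nonempty (Fin k) := ⟨⟨0, hk⟩⟩
  obtain ⟨tail, head, horient, hbal⟩ :=
    exists_isBalancedOn id G.edgeFinset fun e he =>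
      G.not_isDiag_of_mem_edgeSet (mem_edgeFinset.1 he)
  obtain ⟨c, htail, hhead⟩ := exists_isEquitableOn_bipartite (κ := Fin k) tail head G.edgeFinset
  have hdeg := card_tail_add_card_head_eq_degree horient
  have hside : ∀ v, #{e ∈ G.edgeFinset | tail e = v} ≤ Fintype.card (Fin k) * m ∧
      #{e ∈ G.edgeFinset | head e = v} ≤ Fintype.card (Fin k) * m ∧
      (Fintype.card (Fin k) ≤ #{e ∈ G.edgeFinset | tail e = v} ∨
        Fintype.card (Fin k) ≤ #{e ∈ G.edgeFinset | head e = v}) := fun v => by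
    have := hbal v
    have := hdeg v
    have := hlow v
    have := hhigh v
    rw [Fintype.card_fin]
    omega
  refine ⟨fun e => c e, ncard_adj_color_le horient (fun v => htail.card_le (hside v).1)
    (fun v => hhead.card_le (hside v).2.1), fun v => ?_⟩
  rw [colorSpectrum_eq_Iio horient (fun v i => ?_) v]
  · exact fun a _ b hb x _ hx => lt_of_le_of_lt hx hb
  · rcases (hside v).2.2 with h | h
    · obtain ⟨e, he, hv, hc⟩ := htail.exists_color h i
      exact ⟨e, he, .inl hv, hc⟩
    · obtain ⟨e, he, hv, hc⟩ := hhead.exists_color h i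
      exact ⟨e, he, .inr hv, hc⟩

end Graph

end IntervalColoring

/-- If `G` has minimum degree at least 1, then `μ_int(G) ≤ 2⌈Δ(G)/δ(G)⌉`. -/
theorem statement15 {V : Type*} [Fintype V] (G : SimpleGraph V) [DecidableRel G.Adj]
    (hδ : 1 ≤ G.minDegree) :
    G.muInt ≤ 2 * ((G.maxDegree + G.minDegree - 1) / G.minDegree) := by
  classical
  set δ := G.minDegree
  set Δ := G.maxDegree
  have hΔ : Δ ≤ (Δ + δ - 1) / δ * δ := by
    have := Nat.lt_div_mul_add (a := Δ + δ - 1) hδ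
    omega
  have hδk : (Δ + δ - 1) / δ * δ ≤ 2 * ((δ + 1) / 2 * ((Δ + δ - 1) / δ)) := by
    rw [← mul_assoc, mul_comm]
    exact Nat.mul_le_mul_right _ (by omega)
  obtain ⟨c, hc⟩ := IntervalColoring.exists_isImproperIntervalColoring (G := G)
    (k := (δ + 1) / 2) (m := (Δ + δ - 1) / δ) (by omega)
    (fun v => by have := G.minDegree_le_degree v; omega)
    (fun v => (G.degree_le_maxDegree v).trans (hΔ.trans hδk))
  exact Nat.sInf_le ⟨c, hc⟩
end

section
/- If G is a simple graph with maximum degree Δ(G) ≥ 6, then μ_int(G) ≤ ⌈Δ(G)/2⌉. -/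
open SimpleGraph

/-!
Write `d(v)` for the degree and `K = ⌈Δ/2⌉ ≥ 3`. Colour the edges red/blue so that every vertex
has between `d(v) - K` and `min(d(v) - 1, 2K - 2)` red edges (at least one blue edge once
`d(v) ≥ 2`), then split the red edges again so that each vertex sees at most `d_red(v)/2 + 1 ≤ K`
edges of either part. Giving the two red parts colours `0` and `2` and the blue edges colour `1`
yields a `K`-improper colouring with colours `{0, 1, 2}`, and colour `1` appears at every vertex
where both `0` and `2` do, so the spectra are intervals.

Both splittings are instances of one lemma: if `l(v) ≤ ⌊d(v)/2⌋`, `⌈d(v)/2⌉ ≤ u(v)` and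
`l(v) < u(v)` whenever `d(v) > 0`, some red/blue colouring has red degree in `[l(v), u(v)]` at
every vertex. Take a colouring of minimal total violation; at a vertex with too many red edges
(too few is the same after swapping colours), start a walk along a red edge and keep recolouring
unused edges of alternating colours. The degree bounds guarantee that the walk can continue
until it reaches a vertex whose violation does not grow, and then the total violation has
dropped.
-/

open Finset

namespace SimpleGraph

variable {V : Type*} [Fintype V] (G : SimpleGraph V) [DecidableRel G.Adj]

def AdmissibleBounds (l u : V → ℕ) : Prop :=
  ∀ v, l v ≤ G.degree v / 2 ∧ (G.degree v + 1) / 2 ≤ u v ∧ (0 < G.degree v → l v < u v)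

variable {G} in
lemma AdmissibleBounds.compl {l u : V → ℕ} (h : G.AdmissibleBounds l u) :
    G.AdmissibleBounds (fun v => G.degree v - u v) (fun v => G.degree v - l v) := by
  intro v
  have := h v
  beta_reduce
  omega

variable [DecidableEq V]

def redDegree (f : Sym2 V → Bool) (v : V) : ℕ := #{e ∈ G.incidenceFinset v | f e}

lemma redDegree_le_degree (f : Sym2 V → Bool) (v : V) : G.redDegree f v ≤ G.degree v :=
  G.card_incidenceFinset_eq_degree v ▸ card_filter_le _ _

lemma card_filter_eq_false_add_redDegree (f : Sym2 V → Bool) (v : V) :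
    #{e ∈ G.incidenceFinset v | f e = false} + G.redDegree f v = G.degree v := by
  rw [← G.card_incidenceFinset_eq_degree, add_comm, redDegree]
  simpa using card_filter_add_card_filter_not (s := G.incidenceFinset v) (fun e => f e = true)

lemma redDegree_not (f : Sym2 V → Bool) (v : V) :
    G.redDegree (fun e => !f e) v = G.degree v - G.redDegree f v := by
  have := G.card_filter_eq_false_add_redDegree f v
  simp only [redDegree, Bool.not_eq_true'] at this ⊢
  omega

section Flips

def flipCount (f₀ f : Sym2 V → Bool) (b : Bool) (v : V) : ℕ :=
  #{e ∈ G.incidenceFinset v | f₀ e = b ∧ f e ≠ f₀ e}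

def unflippedCount (f₀ f : Sym2 V → Bool) : ℕ := #{e ∈ G.edgeFinset | f e = f₀ e}

lemma redDegree_add_flipCount (f₀ f : Sym2 V → Bool) (v : V) :
    G.redDegree f v + G.flipCount f₀ f true v =
      G.redDegree f₀ v + G.flipCount f₀ f false v := by
  simp only [redDegree, flipCount, card_filter, ← sum_add_distrib]
  refine sum_congr rfl fun e _ => ?_
  cases f₀ e <;> cases f e <;> rfl

lemma flipCount_true_le (f₀ f : Sym2 V → Bool) (v : V) :
    G.flipCount f₀ f true v ≤ G.redDegree f₀ v :=
  card_le_card <| monotone_filter_right _ fun _ _ h => h.1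

lemma flipCount_false_add_redDegree_le (f₀ f : Sym2 V → Bool) (v : V) :
    G.flipCount f₀ f false v + G.redDegree f₀ v ≤ G.degree v :=
  G.card_filter_eq_false_add_redDegree f₀ v ▸
    Nat.add_le_add_right (card_le_card <| monotone_filter_right _ fun _ _ h => h.1) _

lemma exists_unflipped_of_flipCount_lt {f₀ f : Sym2 V → Bool} {b : Bool} {v : V}
    (h : G.flipCount f₀ f b v < #{e ∈ G.incidenceFinset v | f₀ e = b}) :
    ∃ w, G.Adj v w ∧ f₀ s(v, w) = b ∧ f s(v, w) = f₀ s(v, w) := by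
  obtain ⟨e, he, hne⟩ := exists_mem_notMem_of_card_lt_card h
  simp only [mem_filter, mem_incidenceFinset] at he hne
  obtain ⟨w, rfl⟩ := Sym2.mem_iff_exists.mp he.1.2
  exact ⟨w, (G.mem_incidenceSet v w).mp he.1, he.2, by simpa [he.1, he.2] using hne⟩

lemma exists_unflipped_red {f₀ f : Sym2 V → Bool} {v : V}
    (h : G.flipCount f₀ f true v < G.redDegree f₀ v) :
    ∃ w, G.Adj v w ∧ f₀ s(v, w) = true ∧ f s(v, w) = f₀ s(v, w) :=
  G.exists_unflipped_of_flipCount_lt h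

lemma exists_unflipped_blue {f₀ f : Sym2 V → Bool} {v : V}
    (h : G.flipCount f₀ f false v + G.redDegree f₀ v < G.degree v) :
    ∃ w, G.Adj v w ∧ f₀ s(v, w) = false ∧ f s(v, w) = f₀ s(v, w) :=
  G.exists_unflipped_of_flipCount_lt <| by
    have := G.card_filter_eq_false_add_redDegree f₀ v
    omega

lemma flipCount_update {f₀ f : Sym2 V → Bool} {e₀ : Sym2 V} (he₀ : e₀ ∈ G.edgeSet)
    (hclean : f e₀ = f₀ e₀) (b : Bool) (v : V) :
    G.flipCount f₀ (Function.update f e₀ (!f e₀)) b v =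
      G.flipCount f₀ f b v + if v ∈ e₀ ∧ f₀ e₀ = b then 1 else 0 := by
  have hmem : e₀ ∈ G.incidenceFinset v ↔ v ∈ e₀ := by simp [incidenceSet, he₀]
  have hpt : ∀ e, (if f₀ e = b ∧ Function.update f e₀ (!f e₀) e ≠ f₀ e then 1 else 0) =
      (if f₀ e = b ∧ f e ≠ f₀ e then 1 else 0) +
        if e = e₀ then (if f₀ e₀ = b then 1 else 0) else 0 := by
    intro e
    by_cases h : e = e₀
    · subst h
      simp [hclean]
    · simp [h]
  simp only [flipCount, card_filter, hpt, sum_add_distrib, sum_ite_eq', hmem]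
  split_ifs <;> simp_all

lemma unflippedCount_update_lt {f₀ f : Sym2 V → Bool} {e₀ : Sym2 V} (he₀ : e₀ ∈ G.edgeSet)
    (hclean : f e₀ = f₀ e₀) :
    G.unflippedCount f₀ (Function.update f e₀ (!f e₀)) < G.unflippedCount f₀ f := by
  refine card_lt_card ⟨monotone_filter_right _ fun e _ he => ?_, fun h => ?_⟩
  · by_cases h : e = e₀
    · subst h
      simp [hclean] at he
    · simpa [h] using he
  · simpa [hclean] using h (mem_filter.mpr ⟨mem_edgeFinset.mpr he₀, hclean⟩)

/-- The edges on which `f` differs from `f₀` look, as far as degrees are concerned, like an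
alternating trail from `v₀` (leaving along an edge that is red in `f₀`) to `z` (arriving along
an edge of `f₀`-colour `σ`). -/
def IsAlternatingFlip (f₀ : Sym2 V → Bool) (v₀ : V) (f : Sym2 V → Bool) (z : V) (σ : Bool) :
    Prop :=
  ∀ v, (G.flipCount f₀ f true v : ℤ) - G.flipCount f₀ f false v =
    (if v = v₀ then 1 else 0) + if v = z then (if σ then 1 else -1) else 0

variable {G}

lemma isAlternatingFlip_refl (f₀ : Sym2 V → Bool) (v₀ : V) :
    G.IsAlternatingFlip f₀ v₀ f₀ v₀ false := by
  intro v
  by_cases h : v = v₀ <;> simp [flipCount, h]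

namespace IsAlternatingFlip

variable {f₀ f : Sym2 V → Bool} {v₀ z : V} {σ : Bool}

lemma update (h : G.IsAlternatingFlip f₀ v₀ f z σ) {w : V} (hzw : G.Adj z w)
    (hclean : f s(z, w) = f₀ s(z, w)) (hcolor : f₀ s(z, w) = !σ) :
    G.IsAlternatingFlip f₀ v₀ (Function.update f s(z, w) (!f s(z, w))) w (!σ) := by
  intro v
  have hv := h v
  rw [G.flipCount_update hzw hclean, G.flipCount_update hzw hclean, hcolor]
  have := hzw.ne
  by_cases hz : v = z <;> by_cases hw : v = w <;> cases σ <;> simp_all <;> omega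

lemma redDegree_eq (h : G.IsAlternatingFlip f₀ v₀ f z σ) (v : V) :
    (G.redDegree f v : ℤ) = G.redDegree f₀ v - (if v = v₀ then 1 else 0) -
      if v = z then (if σ then 1 else -1) else 0 := by
  have := G.redDegree_add_flipCount f₀ f v
  have := h v
  omega

lemma redDegree_eq_of_ne (h : G.IsAlternatingFlip f₀ v₀ f z σ) {v : V} (hv₀ : v ≠ v₀)
    (hz : v ≠ z) : G.redDegree f v = G.redDegree f₀ v := by
  have := h.redDegree_eq v
  simp only [hv₀, hz, if_false] at this
  omega

end IsAlternatingFlip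

end Flips

section Defect

def defect (l u : V → ℕ) (f : Sym2 V → Bool) (v : V) : ℕ :=
  (l v - G.redDegree f v) + (G.redDegree f v - u v)

def totalDefect (l u : V → ℕ) (f : Sym2 V → Bool) : ℕ := ∑ v, G.defect l u f v

variable {G} {l u : V → ℕ}

lemma totalDefect_compl (hl : ∀ v, l v ≤ G.degree v) (f : Sym2 V → Bool) :
    G.totalDefect (fun v => G.degree v - u v) (fun v => G.degree v - l v) (fun e => !f e) =
      G.totalDefect l u f := by
  refine sum_congr rfl fun v _ => ?_
  have := G.redDegree_le_degree f v
  have := hl v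
  simp only [defect, redDegree_not]
  omega

lemma totalDefect_lt_of_defect_lt {f₀ f : Sym2 V → Bool} {v₀ z : V}
    (hrest : ∀ v, v ≠ v₀ → v ≠ z → G.redDegree f v = G.redDegree f₀ v)
    (hz : G.defect l u f z ≤ G.defect l u f₀ z)
    (hv₀ : G.defect l u f v₀ < G.defect l u f₀ v₀) :
    G.totalDefect l u f < G.totalDefect l u f₀ := by
  refine sum_lt_sum (fun v _ => ?_) ⟨v₀, mem_univ _, hv₀⟩
  by_cases h₀ : v = v₀
  · exact h₀ ▸ hv₀.le
  by_cases hvz : v = z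
  · exact hvz ▸ hz
  · simp only [defect, hrest v h₀ hvz, le_refl]

lemma exists_totalDefect_lt_of_isAlternatingFlip (hlu : G.AdmissibleBounds l u)
    {f₀ : Sym2 V → Bool} {v₀ : V} (hv₀ : u v₀ < G.redDegree f₀ v₀) :
    ∀ (f : Sym2 V → Bool) (z : V) (σ : Bool), G.IsAlternatingFlip f₀ v₀ f z σ →
      ∃ f', G.totalDefect l u f' < G.totalDefect l u f₀ := by
  intro f
  induction hn : G.unflippedCount f₀ f using Nat.strong_induction_on generalizing f with
  | _ n ih =>
  intro z σ h
  have hrest : ∀ v, v ≠ v₀ → v ≠ z → G.redDegree f v = G.redDegree f₀ v :=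
    fun _ => h.redDegree_eq_of_ne
  have hlu₀ := hlu v₀
  have hlu_z := hlu z
  have hTF := h z
  have hv₀' := h.redDegree_eq v₀
  have hz' := h.redDegree_eq z
  have hTle := G.flipCount_true_le f₀ f z
  have hFle := G.flipCount_false_add_redDegree_le f₀ f z
  have extend : ∀ w, G.Adj z w → f₀ s(z, w) = !σ → f s(z, w) = f₀ s(z, w) →
      ∃ f', G.totalDefect l u f' < G.totalDefect l u f₀ := fun w hzw hcolor hclean =>
    ih _ (hn ▸ G.unflippedCount_update_lt hzw hclean) _ rfl w (!σ) (h.update hzw hclean hcolor)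
  -- Either the walk can stop at `z` because its defect did not grow, or the bounds at `z`
  -- leave an unflipped edge of `f₀`-colour `!σ` along which it continues.
  rcases eq_or_ne z v₀ with rfl | hzv
  · cases σ
    · simp only [if_true, Bool.false_eq_true, if_false] at hTF hv₀'
      obtain ⟨w, hzw, hcolor, hclean⟩ := G.exists_unflipped_red (f₀ := f₀) (f := f) (v := z)
        (by omega)
      exact extend w hzw hcolor hclean
    · simp only [if_true] at hTF hv₀'
      exact ⟨f, totalDefect_lt_of_defect_lt hrest (by simp only [defect]; omega)
        (by simp only [defect]; omega)⟩
  · simp only [if_true, if_neg hzv, if_neg hzv.symm] at hTF hv₀' hz'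
    cases σ
    · simp only [Bool.false_eq_true, if_false] at hTF hz'
      by_cases hs : G.redDegree f z ≤ u z
      · exact ⟨f, totalDefect_lt_of_defect_lt hrest (by simp only [defect]; omega)
          (by simp only [defect]; omega)⟩
      · obtain ⟨w, hzw, hcolor, hclean⟩ := G.exists_unflipped_red (f₀ := f₀) (f := f) (v := z)
          (by omega)
        exact extend w hzw hcolor hclean
    · simp only [if_true] at hTF hz'
      by_cases hs : l z ≤ G.redDegree f z
      · exact ⟨f, totalDefect_lt_of_defect_lt hrest (by simp only [defect]; omega)
          (by simp only [defect]; omega)⟩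
      · obtain ⟨w, hzw, hcolor, hclean⟩ := G.exists_unflipped_blue (f₀ := f₀) (f := f) (v := z)
          (by omega)
        exact extend w hzw hcolor hclean

lemma exists_totalDefect_lt_of_lt_redDegree (hlu : G.AdmissibleBounds l u)
    {f₀ : Sym2 V → Bool} {v₀ : V} (hv₀ : u v₀ < G.redDegree f₀ v₀) :
    ∃ f, G.totalDefect l u f < G.totalDefect l u f₀ :=
  exists_totalDefect_lt_of_isAlternatingFlip hlu hv₀ f₀ v₀ false (isAlternatingFlip_refl f₀ v₀)

lemma exists_totalDefect_lt (hlu : G.AdmissibleBounds l u) {f₀ : Sym2 V → Bool}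
    (h : G.totalDefect l u f₀ ≠ 0) : ∃ f, G.totalDefect l u f < G.totalDefect l u f₀ := by
  obtain ⟨v₀, -, hv₀⟩ := exists_ne_zero_of_sum_ne_zero h
  rcases Nat.lt_or_ge (u v₀) (G.redDegree f₀ v₀) with hu | hu
  · exact exists_totalDefect_lt_of_lt_redDegree hlu hu
  -- too few red edges at `v₀` means too many red edges for `!f₀` and the complementary bounds
  have hl : ∀ v, l v ≤ G.degree v := fun v => (hlu v).1.trans (Nat.div_le_self _ _)
  have hcompl : G.degree v₀ - l v₀ < G.redDegree (fun e => !f₀ e) v₀ := by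
    have := hl v₀
    simp only [defect] at hv₀
    rw [redDegree_not]
    omega
  obtain ⟨f, hf⟩ := exists_totalDefect_lt_of_lt_redDegree hlu.compl hcompl
  refine ⟨fun e => !f e, ?_⟩
  rw [← totalDefect_compl hl, ← totalDefect_compl hl f₀]
  simpa only [Bool.not_not] using hf

theorem AdmissibleBounds.exists_redDegree_mem_Icc (hlu : G.AdmissibleBounds l u) :
    ∃ f : Sym2 V → Bool, ∀ v, G.redDegree f v ∈ Set.Icc (l v) (u v) := by
  obtain ⟨f, -, hmin⟩ := (measure (G.totalDefect l u)).wf.has_min Set.univ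
    ⟨fun _ => false, Set.mem_univ _⟩
  have hzero : G.totalDefect l u f = 0 := by
    by_contra h
    obtain ⟨g, hg⟩ := exists_totalDefect_lt hlu h
    exact hmin g (Set.mem_univ _) hg
  refine ⟨f, fun v => ?_⟩
  have := (sum_eq_zero_iff.mp hzero) v (mem_univ v)
  simp only [defect] at this
  exact ⟨by omega, by omega⟩

end Defect

lemma incidenceFinset_deleteEdges_blue (f : Sym2 V → Bool) (v : V) :
    (G.deleteEdges {e | f e = false}).incidenceFinset v = {e ∈ G.incidenceFinset v | f e} := by
  ext e
  simp only [mem_incidenceFinset, incidenceSet, mem_filter, Set.mem_ofPred_eq,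
    edgeSet_deleteEdges, Set.mem_sdiff, Bool.not_eq_false]
  tauto

lemma degree_deleteEdges_blue (f : Sym2 V → Bool) (v : V) :
    (G.deleteEdges {e | f e = false}).degree v = G.redDegree f v := by
  rw [← card_incidenceFinset_eq_degree, incidenceFinset_deleteEdges_blue]
  rfl

lemma redDegree_deleteEdges_blue (f g : Sym2 V → Bool) (v : V) :
    (G.deleteEdges {e | f e = false}).redDegree g v =
      #{e ∈ G.incidenceFinset v | f e ∧ g e} := by
  rw [redDegree, incidenceFinset_deleteEdges_blue, filter_filter]

theorem exists_three_edge_coloring {K : ℕ} (hK : 3 ≤ K) (hdeg : ∀ v, G.degree v ≤ 2 * K) :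
    ∃ c : Sym2 V → ℕ, (∀ e, c e ≤ 2) ∧ (∀ v n, #{e ∈ G.incidenceFinset v | c e = n} ≤ K) ∧
      ∀ v, 0 < #{e ∈ G.incidenceFinset v | c e = 0} →
        0 < #{e ∈ G.incidenceFinset v | c e = 2} → 0 < #{e ∈ G.incidenceFinset v | c e = 1} := by
  -- at most `2K - 2` red edges, so that halving them gives at most `K`, and fewer red edges
  -- than `d(v)` once `d(v) ≥ 2`, so that the blue colour `1` occurs
  obtain ⟨f₁, hf₁⟩ := AdmissibleBounds.exists_redDegree_mem_Icc (G := G)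
    (l := fun v => G.degree v - K) (u := fun v => max 1 (min (G.degree v - 1) (2 * K - 2)))
    (fun v => by have := hdeg v; beta_reduce; omega)
  obtain ⟨f₂, hf₂⟩ := AdmissibleBounds.exists_redDegree_mem_Icc
    (G := G.deleteEdges {e | f₁ e = false})
    (l := fun v => (G.redDegree f₁ v + 1) / 2 - 1) (u := fun v => G.redDegree f₁ v / 2 + 1)
    (fun v => by beta_reduce; rw [degree_deleteEdges_blue]; omega)
  simp only [redDegree_deleteEdges_blue] at hf₂
  set c : Sym2 V → ℕ := fun e => if f₁ e then (if f₂ e then 0 else 2) else 1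
  have hc0 : ∀ v, #{e ∈ G.incidenceFinset v | c e = 0} =
      #{e ∈ G.incidenceFinset v | f₁ e ∧ f₂ e} := fun v => by
    refine congrArg card (filter_congr fun e _ => ?_)
    cases h₁ : f₁ e <;> cases h₂ : f₂ e <;> simp [c, h₁, h₂]
  have hc02 : ∀ v, #{e ∈ G.incidenceFinset v | c e = 0} +
      #{e ∈ G.incidenceFinset v | c e = 2} = G.redDegree f₁ v := fun v => by
    simp only [redDegree, card_filter, ← sum_add_distrib]
    refine sum_congr rfl fun e _ => ?_
    cases h₁ : f₁ e <;> cases h₂ : f₂ e <;> simp [c, h₁, h₂]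
  have hc1 : ∀ v, #{e ∈ G.incidenceFinset v | c e = 1} + G.redDegree f₁ v = G.degree v :=
    fun v => by
    rw [← G.card_filter_eq_false_add_redDegree f₁ v]
    refine congrArg (· + _) (congrArg card (filter_congr fun e _ => ?_))
    cases h₁ : f₁ e <;> cases h₂ : f₂ e <;> simp [c, h₁, h₂]
  have hc_le : ∀ e, c e ≤ 2 := fun e => by
    cases h₁ : f₁ e <;> cases h₂ : f₂ e <;> simp [c, h₁, h₂]
  refine ⟨c, hc_le, fun v n => ?_, fun v h0 h2 => ?_⟩
  · obtain ⟨h₁l, h₁u⟩ := hf₁ v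
    obtain ⟨h₂l, h₂u⟩ := hf₂ v
    have := hc0 v
    have := hc02 v
    have := hc1 v
    rcases le_or_gt n 2 with hn | hn
    · interval_cases n <;> omega
    · rw [card_eq_zero.mpr (filter_eq_empty_iff.mpr fun e _ => by have := hc_le e; omega)]
      omega
  · obtain ⟨-, h₁u⟩ := hf₁ v
    have := hc02 v
    have := hc1 v
    omega

lemma ncard_setOf_adj_eq_card_filter_incidenceFinset (p : Sym2 V → Prop) [DecidablePred p]
    (v : V) : {w | G.Adj v w ∧ p s(v, w)}.ncard = #{e ∈ G.incidenceFinset v | p e} := by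
  rw [← Set.ncard_coe_finset]
  refine Set.ncard_congr (fun w _ => s(v, w)) (fun w hw => ?_)
    (fun _ _ _ _ h => Sym2.congr_right.mp h) (fun e he => ?_)
  · simpa [mem_incidenceSet] using hw
  · simp only [coe_filter, mem_incidenceFinset, Set.mem_ofPred_eq] at he
    obtain ⟨w, rfl⟩ := Sym2.mem_iff_exists.mp he.1.2
    exact ⟨w, ⟨(G.mem_incidenceSet v w).mp he.1, he.2⟩, rfl⟩

lemma mem_colorSpectrum_iff (c : Sym2 V → ℕ) (v : V) (n : ℕ) :
    n ∈ G.colorSpectrum c v ↔ 0 < #{e ∈ G.incidenceFinset v | c e = n} := by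
  rw [← ncard_setOf_adj_eq_card_filter_incidenceFinset, Set.ncard_pos (Set.toFinite _)]
  rfl

theorem isImproperIntervalColoring_of_le_two {c : Sym2 V → ℕ} {k : ℕ} (hc : ∀ e, c e ≤ 2)
    (hk : ∀ v n, #{e ∈ G.incidenceFinset v | c e = n} ≤ k)
    (hmid : ∀ v, 0 < #{e ∈ G.incidenceFinset v | c e = 0} →
      0 < #{e ∈ G.incidenceFinset v | c e = 2} → 0 < #{e ∈ G.incidenceFinset v | c e = 1}) :
    G.IsImproperIntervalColoring c k := by
  refine ⟨fun v n => ncard_setOf_adj_eq_card_filter_incidenceFinset G (c · = n) v ▸ hk v n,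
    fun v a ha b hb x hax hxb => ?_⟩
  have hle : ∀ n ∈ G.colorSpectrum c v, n ≤ 2 := fun n ⟨w, _, hw⟩ => hw ▸ hc _
  have ha2 := hle a ha
  have hb2 := hle b hb
  rcases (by omega : x = a ∨ x = b ∨ (a = 0 ∧ x = 1 ∧ b = 2)) with rfl | rfl | ⟨rfl, rfl, rfl⟩
  · exact ha
  · exact hb
  · rw [mem_colorSpectrum_iff] at ha hb ⊢
    exact hmid v ha hb

end SimpleGraph

/-- If `G` has maximum degree at least 6, then `μ_int(G) ≤ ⌈Δ(G)/2⌉`. -/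
theorem statement16 {V : Type*} [Fintype V] (G : SimpleGraph V) [DecidableRel G.Adj]
    (hΔ : 6 ≤ G.maxDegree) :
    G.muInt ≤ (G.maxDegree + 1) / 2 := by
  classical
  have hdeg : ∀ v, G.degree v ≤ 2 * ((G.maxDegree + 1) / 2) := fun v => by
    have := G.degree_le_maxDegree v
    omega
  obtain ⟨c, hc, hk, hmid⟩ := G.exists_three_edge_coloring (by omega) hdeg
  exact Nat.sInf_le ⟨c, G.isImproperIntervalColoring_of_le_two hc hk hmid⟩
end

section
/- For any r ≥ 2 and positive integers n_1, n_2, …, n_r, the complete r-partite graph K_{n_1,n_2,…,n_r} satisfies μ_int(K_{n_1,n_2,…,n_r}) ≤ ⌈r/2⌉. -/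
open SimpleGraph

namespace Stmt17

variable (r : ℕ) (n : Fin r → ℕ)

/-- Size of part `t` (0 if out of range). -/
def np (t : ℕ) : ℕ := if h : t < r then n ⟨t, h⟩ else 0

/-- Prefix sums of merged group sizes (group `x` = parts `2x`, `2x+1`). -/
def Sp (h : ℕ) : ℕ := ∑ x ∈ Finset.range h, (np r n (2*x) + np r n (2*x+1))

/-- Correction term. -/
def ee (p q : ℕ) : ℕ := if p % 2 = 1 ∧ p / 2 ≠ q / 2 then np r n (p - 1) else 0

/-- Offset for colors of edges between parts `p` and `q`. -/
def off (p q : ℕ) : ℕ := Sp r n (min (p/2) (q/2)) + ee r n p q + ee r n q p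

lemma np_fin (i : Fin r) : np r n i.val = n i := by simp [np]

lemma np_pos_lt {t : ℕ} (h : 0 < np r n t) : t < r := by
  by_contra hc
  simp [np, hc] at h

lemma Sp_succ (h : ℕ) : Sp r n (h+1) = Sp r n h + (np r n (2*h) + np r n (2*h+1)) :=
  Finset.sum_range_succ _ _

lemma Sp_mono {h h' : ℕ} (hh : h ≤ h') : Sp r n h ≤ Sp r n h' := by
  unfold Sp
  exact Finset.sum_le_sum_of_subset (Finset.range_subset_range.2 hh)

lemma locate {g y : ℕ} (h : y < Sp r n g) :
    ∃ h', h' < g ∧ Sp r n h' ≤ y ∧ y < Sp r n h' + np r n (2*h') + np r n (2*h'+1) := by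
  induction g with
  | zero => simp [Sp] at h
  | succ g ih =>
    by_cases hy : y < Sp r n g
    · obtain ⟨h', h1, h2, h3⟩ := ih hy
      exact ⟨h', Nat.lt_succ_of_lt h1, h2, h3⟩
    · refine ⟨g, Nat.lt_succ_self g, by omega, ?_⟩
      have := Sp_succ r n g
      omega

lemma ee_eq {p q : ℕ} (h : p / 2 ≠ q / 2) :
    ee r n p q = if p % 2 = 1 then np r n (p - 1) else 0 := by
  unfold ee
  by_cases hp : p % 2 = 1 <;> simp [hp, h]

lemma ee_self {p q : ℕ} (h : p / 2 = q / 2) : ee r n p q = 0 := by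
  simp [ee, h]

lemma ee_even {p q : ℕ} (h : p % 2 = 0) : ee r n p q = 0 := by
  unfold ee
  rw [if_neg (by omega)]

abbrev Vt := (i : Fin r) × Fin (n i)

/-- The coloring. -/
def col : Sym2 (Vt r n) → ℕ :=
  Sym2.lift ⟨fun u v => u.2.val + v.2.val + off r n u.1.val v.1.val, fun u v => by
    dsimp only
    unfold off
    rw [min_comm]
    omega⟩

lemma col_mk (u v : Vt r n) :
    col r n s(u, v) = u.2.val + v.2.val + off r n u.1.val v.1.val := rfl

lemma off_lower (p q : ℕ) :
    min (Sp r n (p/2)) (if p % 2 = 1 then np r n (p-1) else 0) ≤ off r n p q := by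
  by_cases h : p / 2 = q / 2
  · have hmm : min (p/2) (q/2) = p/2 := by omega
    have h2 := min_le_left (Sp r n (p/2)) (if p % 2 = 1 then np r n (p-1) else 0)
    unfold off
    rw [hmm]
    omega
  · have h1 := ee_eq r n h
    have h2 := min_le_right (Sp r n (p/2)) (if p % 2 = 1 then np r n (p-1) else 0)
    unfold off
    omega

lemma mem_spec (v : Vt r n) (x i w2 : ℕ) (hi : i < r) (hw2 : w2 < np r n i)
    (hne : i ≠ v.1.val) (hx : v.2.val + w2 + off r n v.1.val i = x) :
    x ∈ (completeMultipartiteGraph fun i : Fin r => Fin (n i)).colorSpectrum (col r n) v := by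
  have hw2' : w2 < n ⟨i, hi⟩ := by rwa [np, dif_pos hi] at hw2
  refine ⟨⟨⟨i, hi⟩, ⟨w2, hw2'⟩⟩, ?_, ?_⟩
  · intro h
    exact hne (by rw [h])
  · rw [col_mk]
    exact hx

/-- Central arithmetic lemma: construction of a witness for every color between
the lower bound and an attained color. -/
lemma main_arith (pv pb x av wb2 E : ℕ) (hpv : pv < r) (hpb : pb < r) (hne : pb ≠ pv)
    (hwb2 : wb2 < np r n pb)
    (hE : E = if pv % 2 = 1 then np r n (pv - 1) else 0)
    (hlo : av + min (Sp r n (pv / 2)) E ≤ x)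
    (hhi : x ≤ av + wb2 + off r n pv pb) :
    ∃ i w2, i < r ∧ w2 < np r n i ∧ i ≠ pv ∧ av + w2 + off r n pv i = x := by
  have hminlo : av + Sp r n (pv/2) ≤ x ∨ av + E ≤ x := by
    rcases le_total (Sp r n (pv/2)) E with h | h
    · left; rw [min_eq_left h] at hlo; exact hlo
    · right; rw [min_eq_right h] at hlo; exact hlo
  by_cases hC1 : av + off r n pv pb ≤ x
  · exact ⟨pb, x - av - off r n pv pb, hpb, by omega, hne, by omega⟩
  push_neg at hC1
  by_cases hC2c : x < av + E
  · -- below E: partner part pv-1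
    have hodd : pv % 2 = 1 := by
      by_contra h
      rw [if_neg h] at hE
      omega
    have hEv : E = np r n (pv - 1) := by rw [hE, if_pos hodd]
    have hSgle : av + Sp r n (pv/2) ≤ x := by
      rcases hminlo with h | h
      · exact h
      · omega
    have hdiv : (pv - 1) / 2 = pv / 2 := by omega
    have hoff : off r n pv (pv - 1) = Sp r n (pv / 2) := by
      unfold off
      rw [ee_self r n (by omega : pv / 2 = (pv-1)/2), ee_self r n (by omega : (pv-1)/2 = pv/2),
        hdiv, min_self]
      try omega
    exact ⟨pv - 1, x - av - Sp r n (pv/2), by omega, by omega, by omega, by rw [hoff]; omega⟩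
  by_cases hC2b : x < av + Sp r n (pv/2) + E
  · -- middle zone
    obtain ⟨h', hh'g, hSh', hSh'2⟩ := locate r n (show x - av - E < Sp r n (pv/2) by omega)
    by_cases hd : x - av - E - Sp r n h' < np r n (2*h')
    · have hoff : off r n pv (2*h') = Sp r n h' + E := by
        unfold off
        have h1 : (2*h')/2 = h' := by omega
        rw [h1, min_eq_right (by omega : h' ≤ pv/2),
          ee_eq r n (show pv/2 ≠ (2*h')/2 by omega),
          ee_even r n (by omega : (2*h') % 2 = 0), ← hE]
        try omega
      exact ⟨2*h', x - av - E - Sp r n h', by omega, by omega, by omega, by rw [hoff]; omega⟩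
    · have h2hr : 2*h'+1 < r := np_pos_lt r n (by omega)
      have hoff : off r n pv (2*h'+1) = Sp r n h' + E + np r n (2*h') := by
        unfold off
        have h1 : (2*h'+1)/2 = h' := by omega
        rw [h1, min_eq_right (by omega : h' ≤ pv/2),
          ee_eq r n (show pv/2 ≠ (2*h'+1)/2 by omega),
          ee_eq r n (show (2*h'+1)/2 ≠ pv/2 by omega),
          if_pos (by omega : (2*h'+1) % 2 = 1), ← hE]
        have h3 : 2*h'+1-1 = 2*h' := by omega
        rw [h3]
        try omega
      exact ⟨2*h'+1, x - av - E - Sp r n h' - np r n (2*h'), h2hr, by omega, by omega,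
        by rw [hoff]; omega⟩
  · -- upper zone
    have hb_gt : pv/2 < pb/2 := by
      by_contra hle
      push_neg at hle
      rcases eq_or_lt_of_le hle with heq | hlt
      · have hoff : off r n pv pb = Sp r n (pv/2) := by
          unfold off
          rw [ee_self r n (by omega : pv/2 = pb/2), ee_self r n (by omega : pb/2 = pv/2),
            heq, min_self]
          try omega
        omega
      · have hoffle : off r n pv pb ≤ Sp r n (pv/2) + E := by
          unfold off
          rw [min_eq_right (le_of_lt hlt), ee_eq r n (by omega : pv/2 ≠ pb/2)]
          have hee : ee r n pb pv ≤ np r n (2*(pb/2)) := by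
            unfold ee
            split_ifs with h
            · have h4 : pb - 1 = 2*(pb/2) := by omega
              rw [h4]
            · exact Nat.zero_le _
          have hstep : Sp r n (pb/2) + np r n (2*(pb/2)) ≤ Sp r n (pb/2 + 1) := by
            rw [Sp_succ]
            omega
          have hmono : Sp r n (pb/2 + 1) ≤ Sp r n (pv/2) := Sp_mono r n (by omega)
          rw [← hE]
          omega
        omega
    have hoffb : off r n pv pb = Sp r n (pv/2) + E + ee r n pb pv := by
      unfold off
      rw [min_eq_left (by omega), ee_eq r n (by omega : pv/2 ≠ pb/2), ← hE]
      try omega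
    have heeb : 0 < ee r n pb pv := by omega
    have hbodd : pb % 2 = 1 ∧ ee r n pb pv = np r n (pb - 1) := by
      unfold ee at heeb ⊢
      split_ifs at heeb ⊢ with h
      · exact ⟨h.1, rfl⟩
      · omega
    have hoffi : off r n pv (pb - 1) = Sp r n (pv/2) + E := by
      unfold off
      rw [min_eq_left (by omega : pv/2 ≤ (pb-1)/2),
        ee_eq r n (show pv/2 ≠ (pb-1)/2 by omega),
        ee_even r n (by omega : (pb-1) % 2 = 0), ← hE]
      try omega
    refine ⟨pb - 1, x - av - (Sp r n (pv/2) + E), by omega, ?_, by omega, by rw [hoffi]; omega⟩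
    have h5 := hbodd.2
    omega

lemma interval_main (v : Vt r n) :
    IsIntervalSet
      ((completeMultipartiteGraph fun i : Fin r => Fin (n i)).colorSpectrum (col r n) v) := by
  intro a ha b hb x hax hxb
  obtain ⟨wa, haadj, hacol⟩ := ha
  obtain ⟨wb, hbadj, hbcol⟩ := hb
  rw [col_mk] at hacol hbcol
  have hlowa := off_lower r n v.1.val wa.1.val
  have hwb2 : wb.2.val < np r n wb.1.val := by rw [np_fin]; exact wb.2.isLt
  have hbne : wb.1.val ≠ v.1.val := fun h => hbadj (Fin.ext h.symm)
  obtain ⟨i, w2, hir, hw2, hine, hxeq⟩ :=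
    main_arith r n v.1.val wb.1.val x v.2.val wb.2.val _ v.1.isLt wb.1.isLt hbne hwb2 rfl
      (by omega) (by omega)
  exact mem_spec r n v x i w2 hir hw2 hine hxeq

lemma count_le (v : Vt r n) (x : ℕ) :
    {w | (completeMultipartiteGraph fun i : Fin r => Fin (n i)).Adj v w ∧
      col r n s(v, w) = x}.ncard ≤ (r+1)/2 := by
  classical
  have maps : ∀ w ∈ {w : Vt r n |
      (completeMultipartiteGraph fun i : Fin r => Fin (n i)).Adj v w ∧ col r n s(v, w) = x},
      (fun w : Vt r n => w.1.val / 2) w ∈ (↑(Finset.range ((r+1)/2)) : Set ℕ) := by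
    rintro w ⟨-, -⟩
    simp only [Finset.coe_range, Set.mem_Iio]
    have := w.1.isLt
    omega
  have key : Set.InjOn (fun w : Vt r n => w.1.val / 2) {w : Vt r n |
      (completeMultipartiteGraph fun i : Fin r => Fin (n i)).Adj v w ∧ col r n s(v, w) = x} := by
    rintro w ⟨hadj, hcol⟩ w' ⟨hadj', hcol'⟩ heq
    simp only at heq
    rw [col_mk] at hcol hcol'
    by_cases hpp : w.1 = w'.1
    · obtain ⟨i, a⟩ := w
      obtain ⟨i', a'⟩ := w'
      dsimp only at hpp hcol hcol' heq
      subst hpp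
      have hval : a.val = a'.val := by omega
      exact congrArg (Sigma.mk i) (Fin.ext hval)
    · exfalso
      have hval : w.1.val ≠ w'.1.val := fun h => hpp (Fin.ext h)
      have hv1 : v.1.val ≠ w.1.val := fun h => hadj (Fin.ext h)
      have hv1' : v.1.val ≠ w'.1.val := fun h => hadj' (Fin.ext h)
      have hb1 : w.2.val < np r n w.1.val := by rw [np_fin]; exact w.2.isLt
      have hb1' : w'.2.val < np r n w'.1.val := by rw [np_fin]; exact w'.2.isLt
      by_cases hvg : v.1.val / 2 = w.1.val / 2
      · omega
      · unfold off at hcol hcol'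
        rw [ee_eq r n (show v.1.val/2 ≠ w.1.val/2 from hvg)] at hcol
        rw [ee_eq r n (show v.1.val/2 ≠ w'.1.val/2 by omega)] at hcol'
        have hmm : min (v.1.val/2) (w.1.val/2) = min (v.1.val/2) (w'.1.val/2) := by omega
        rw [hmm] at hcol
        rcases (show (w'.1.val = w.1.val + 1 ∧ w.1.val % 2 = 0) ∨
            (w.1.val = w'.1.val + 1 ∧ w'.1.val % 2 = 0) by omega) with ⟨h1, h2⟩ | ⟨h1, h2⟩
        · rw [ee_even r n h2] at hcol
          have hrw : ee r n w'.1.val v.1.val = np r n w.1.val := by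
            unfold ee
            rw [if_pos ⟨by omega, by omega⟩]
            congr 1
            omega
          rw [hrw] at hcol'
          omega
        · rw [ee_even r n h2] at hcol'
          have hrw : ee r n w.1.val v.1.val = np r n w'.1.val := by
            unfold ee
            rw [if_pos ⟨by omega, by omega⟩]
            congr 1
            omega
          rw [hrw] at hcol
          omega
  have := Set.ncard_le_ncard_of_injOn _ maps key (Finset.finite_toSet _)
  rwa [Set.ncard_coe_finset, Finset.card_range] at this

end Stmt17

/-- The complete `r`-partite graph `K_{n_1,…,n_r}` (`r ≥ 2`, all parts nonempty)
has impropriety at most `⌈r/2⌉`. -/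
theorem statement17 (r : ℕ) (hr : 2 ≤ r) (n : Fin r → ℕ) (hn : ∀ i, 0 < n i) :
    (completeMultipartiteGraph fun i : Fin r => Fin (n i)).muInt ≤ (r + 1) / 2 := by
  apply Nat.sInf_le
  exact ⟨Stmt17.col r n, fun v x => Stmt17.count_le r n v x, fun v => Stmt17.interval_main r n v⟩
end

section
/- For any simple graphs G and H (each with at least one edge), the Cartesian product G □ H satisfies μ_int(G □ H) ≤ max{μ_int(G), μ_int(H)}. -/
open SimpleGraph

lemma spectrum_finite {V : Type*} [Finite V] (G : SimpleGraph V) (c : Sym2 V → ℕ) (v : V) :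
    (G.colorSpectrum c v).Finite := by
  have h : G.colorSpectrum c v = (fun w => c s(v, w)) '' {w | G.Adj v w} := by
    ext n
    simp only [SimpleGraph.colorSpectrum, Set.mem_setOf_eq, Set.mem_image]
  rw [h]
  exact (Set.toFinite _).image _

lemma exists_coloring {V : Type*} [Fintype V] (G : SimpleGraph V) :
    ∃ c, G.IsImproperIntervalColoring c (Fintype.card V) := by
  refine ⟨fun _ => 0, ?_, ?_⟩
  · intro v n
    calc {w | G.Adj v w ∧ (0:ℕ) = n}.ncard ≤ (Set.univ : Set V).ncard :=
          Set.ncard_le_ncard (Set.subset_univ _) (Set.toFinite _)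
      _ = Fintype.card V := by rw [Set.ncard_univ, Nat.card_eq_fintype_card]
  · intro v a ha b hb x hax hxb
    obtain ⟨w, hw, h0⟩ := ha
    obtain ⟨w', hw', h0'⟩ := hb
    simp only at h0 h0' 
    have : x = 0 := by omega
    exact ⟨w, hw, by simp only; omega⟩

lemma muInt_coloring {V : Type*} [Fintype V] (G : SimpleGraph V) :
    ∃ c, G.IsImproperIntervalColoring c G.muInt := by
  have hne : {k | ∃ c : Sym2 V → ℕ, G.IsImproperIntervalColoring c k}.Nonempty :=
    ⟨Fintype.card V, exists_coloring G⟩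
  exact Nat.sInf_mem hne

/-- For graphs `G` and `H`, each with at least one edge, the Cartesian (box) product
satisfies `μ_int(G □ H) ≤ max {μ_int(G), μ_int(H)}`. -/
theorem statement18 {α β : Type*} [Fintype α] [Fintype β]
    (G : SimpleGraph α) (H : SimpleGraph β)
    (hG : G.edgeSet.Nonempty) (hH : H.edgeSet.Nonempty) :
    (G □ H).muInt ≤ max G.muInt H.muInt := by
  classical
  obtain ⟨cG, hcG⟩ := muInt_coloring G
  obtain ⟨cH, hcH⟩ := muInt_coloring H
  set kG := G.muInt with hkG
  set kH := H.muInt with hkH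
  set aH : β → ℕ := fun v => sInf (H.colorSpectrum cH v) with haH
  set bG : α → ℕ := fun u => sSup (G.colorSpectrum cG u) with hbG
  set f : α × β → α × β → ℕ := fun x y =>
    if x.2 = y.2 then cG s(x.1, y.1) + aH x.2
    else if x.1 = y.1 then cH s(x.2, y.2) + bG x.1 + 1 else 0 with hf
  have hsymm : ∀ x y : α × β, f x y = f y x := by
    intro x y
    simp only [hf]
    rcases eq_or_ne x.2 y.2 with h2 | h2
    · simp [h2, Sym2.eq_swap]
    · rcases eq_or_ne x.1 y.1 with h1 | h1
      · simp [h1, h2, Ne.symm h2, Sym2.eq_swap]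
      · simp [h1, h2, Ne.symm h2, Ne.symm h1]
  set c : Sym2 (α × β) → ℕ := Sym2.lift ⟨f, hsymm⟩ with hc
  have hGedge : ∀ (u u' : α) (v : β), c s((u, v), (u', v)) = cG s(u, u') + aH v := by
    intro u u' v
    simp [hc, hf]
  have hHedge : ∀ (u : α) (v v' : β), v ≠ v' → c s((u, v), (u, v')) = cH s(v, v') + bG u + 1 := by
    intro u v v' hne
    simp [hc, hf, hne]
  -- bounds
  have hbound1 : ∀ u u', G.Adj u u' → cG s(u, u') ≤ bG u := by
    intro u u' h
    exact le_csSup (spectrum_finite G cG u).bddAbove ⟨u', h, rfl⟩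
  have hbound2 : ∀ v v', H.Adj v v' → aH v ≤ cH s(v, v') := by
    intro v v' h
    exact Nat.sInf_le ⟨v', h, rfl⟩
  have hmemb : ∀ u, (G.colorSpectrum cG u).Nonempty → bG u ∈ G.colorSpectrum cG u := by
    intro u hne
    exact Set.Nonempty.csSup_mem hne (spectrum_finite G cG u)
  have hmema : ∀ v, (H.colorSpectrum cH v).Nonempty → aH v ∈ H.colorSpectrum cH v := by
    intro v hne
    exact Nat.sInf_mem hne
  -- spectrum characterization
  have hSpec : ∀ (u : α) (v : β), (G □ H).colorSpectrum c (u, v) =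
      (fun m => m + aH v) '' G.colorSpectrum cG u ∪
      (fun m => m + (bG u + 1)) '' H.colorSpectrum cH v := by
    intro u v
    ext n
    constructor
    · rintro ⟨⟨w1, w2⟩, hadj, hcol⟩
      rcases SimpleGraph.boxProd_adj.mp hadj with ⟨h1, h2⟩ | ⟨h1, h2⟩
      · left
        refine ⟨cG s(u, w1), ⟨w1, h1, rfl⟩, ?_⟩
        dsimp only at h2 ⊢
        subst h2
        rw [hGedge] at hcol
        exact hcol
      · right
        refine ⟨cH s(v, w2), ⟨w2, h1, rfl⟩, ?_⟩
        dsimp only at h2 ⊢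
        subst h2
        rw [hHedge u v w2 h1.ne] at hcol
        omega
    · rintro (⟨m, ⟨u', hu', rfl⟩, rfl⟩ | ⟨m, ⟨v', hv', rfl⟩, rfl⟩)
      · exact ⟨(u', v), SimpleGraph.boxProd_adj.mpr (Or.inl ⟨hu', rfl⟩), hGedge u u' v⟩
      · refine ⟨(u, v'), SimpleGraph.boxProd_adj.mpr (Or.inr ⟨hv', rfl⟩), ?_⟩
        rw [hHedge u v v' hv'.ne]
        simp only
        omega
  apply Nat.sInf_le
  refine ⟨c, ?_, ?_⟩
  · rintro ⟨u, v⟩ n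
    by_cases hcase : n ≤ bG u + aH v
    · have hsub : {w | (G □ H).Adj (u, v) w ∧ c s((u, v), w) = n} ⊆
          (fun u' => (u', v)) '' {u' | G.Adj u u' ∧ cG s(u, u') = n - aH v} := by
        rintro ⟨w1, w2⟩ ⟨hadj, hcol⟩
        rcases SimpleGraph.boxProd_adj.mp hadj with ⟨h1, h2⟩ | ⟨h1, h2⟩
        · dsimp only at h1 h2
          subst h2
          rw [hGedge] at hcol
          have h3 : aH v ≤ n := by omega
          exact ⟨w1, ⟨h1, by omega⟩, rfl⟩
        · dsimp only at h1 h2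
          subst h2
          rw [hHedge u v w2 h1.ne] at hcol
          have := hbound2 v w2 h1
          omega
      calc {w | (G □ H).Adj (u, v) w ∧ c s((u, v), w) = n}.ncard
          ≤ ((fun u' => (u', v)) '' {u' | G.Adj u u' ∧ cG s(u, u') = n - aH v}).ncard :=
            Set.ncard_le_ncard hsub (Set.toFinite _)
        _ ≤ {u' | G.Adj u u' ∧ cG s(u, u') = n - aH v}.ncard := Set.ncard_image_le (Set.toFinite _)
        _ ≤ kG := hcG.1 u (n - aH v)
        _ ≤ max kG kH := le_max_left _ _
    · have hsub : {w | (G □ H).Adj (u, v) w ∧ c s((u, v), w) = n} ⊆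
          (fun v' => (u, v')) '' {v' | H.Adj v v' ∧ cH s(v, v') = n - (bG u + 1)} := by
        rintro ⟨w1, w2⟩ ⟨hadj, hcol⟩
        rcases SimpleGraph.boxProd_adj.mp hadj with ⟨h1, h2⟩ | ⟨h1, h2⟩
        · dsimp only at h1 h2
          subst h2
          rw [hGedge] at hcol
          have := hbound1 u w1 h1
          omega
        · dsimp only at h1 h2
          subst h2
          rw [hHedge u v w2 h1.ne] at hcol
          exact ⟨w2, ⟨h1, by omega⟩, rfl⟩
      calc {w | (G □ H).Adj (u, v) w ∧ c s((u, v), w) = n}.ncard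
          ≤ ((fun v' => (u, v')) '' {v' | H.Adj v v' ∧ cH s(v, v') = n - (bG u + 1)}).ncard :=
            Set.ncard_le_ncard hsub (Set.toFinite _)
        _ ≤ {v' | H.Adj v v' ∧ cH s(v, v') = n - (bG u + 1)}.ncard :=
            Set.ncard_image_le (Set.toFinite _)
        _ ≤ kH := hcH.1 v (n - (bG u + 1))
        _ ≤ max kG kH := le_max_right _ _
  · rintro ⟨u, v⟩
    rw [hSpec u v]
    intro a ha b hb x hax hxb
    by_cases hxcase : x ≤ bG u + aH v
    · -- x belongs to the shifted G-spectrum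
      rcases ha with ⟨mA, hmA, hEq⟩ | ⟨mB, hmB, hEq⟩
      · simp only at hEq
        have hGne : (G.colorSpectrum cG u).Nonempty := ⟨mA, hmA⟩
        have hbmem := hmemb u hGne
        have hmle : mA ≤ x - aH v := by omega
        have hle2 : x - aH v ≤ bG u := by omega
        have hx : x - aH v ∈ G.colorSpectrum cG u := hcG.2 u mA hmA (bG u) hbmem _ hmle hle2
        left
        exact ⟨x - aH v, hx, by simp only; omega⟩
      · simp only at hEq
        exfalso
        have : aH v ≤ mB := Nat.sInf_le hmB
        omega
    · -- x belongs to the shifted H-spectrum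
      rcases hb with ⟨mA, hmA, hEq⟩ | ⟨mB, hmB, hEq⟩
      · simp only at hEq
        exfalso
        have : mA ≤ bG u := le_csSup (spectrum_finite G cG u).bddAbove hmA
        omega
      · simp only at hEq
        have hHne : (H.colorSpectrum cH v).Nonempty := ⟨mB, hmB⟩
        have hamem := hmema v hHne
        have h1 : aH v ≤ x - (bG u + 1) := by omega
        have h2 : x - (bG u + 1) ≤ mB := by omega
        have hx : x - (bG u + 1) ∈ H.colorSpectrum cH v :=
          hcH.2 v (aH v) hamem mB hmB _ h1 h2
        right
        exact ⟨x - (bG u + 1), hx, by simp only; omega⟩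
end

section
/- For each connected simple graph G on n vertices with n ≥ 2 (and at least one edge), the maximum number of colors t̂(G) used in an improper interval edge coloring of G satisfies t̂(G) ≤ 2n − 3. -/
open SimpleGraph

/-- For a connected graph `G` on `n ≥ 2` vertices with at least one edge, every
improper interval edge coloring using the colors `1, …, t` (each color appearing on
some edge) satisfies `t ≤ 2n - 3`; that is, `t̂(G) ≤ 2n - 3`. -/
theorem statement19 {V : Type*} [Fintype V] (G : SimpleGraph V) (hconn : G.Connected)
    (hn : 2 ≤ Fintype.card V) (hE : G.edgeSet.Nonempty) (t : ℕ) (c : Sym2 V → ℕ)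
    (hinterval : ∀ v, IsIntervalSet (G.colorSpectrum c v))
    (hrange : ∀ e ∈ G.edgeSet, c e ∈ Finset.Icc 1 t)
    (hall : ∀ i ∈ Finset.Icc 1 t, ∃ e ∈ G.edgeSet, c e = i) :
    t ≤ 2 * Fintype.card V - 3 := by
  classical
  set N := Fintype.card V with hN
  haveI hVne : Nonempty V := Fintype.card_pos_iff.mp (by omega)
  -- t ≥ 1
  have ht1 : 1 ≤ t := by
    obtain ⟨e, he⟩ := hE
    have h := hrange e he
    rw [Finset.mem_Icc] at h
    omega
  -- every vertex has a neighbor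
  have hfirst : ∀ {x y : V}, G.Walk x y → x ≠ y → ∃ w, G.Adj x w := by
    intro x y wk
    induction wk with
    | nil => intro h; exact absurd rfl h
    | cons h' p ih => intro _; exact ⟨_, h'⟩
  have hadj : ∀ v : V, ∃ w, G.Adj v w := by
    intro v
    obtain ⟨u, hu⟩ := Fintype.exists_ne_of_one_lt_card (by omega) v
    obtain ⟨wk⟩ := hconn.preconnected v u
    exact hfirst wk (Ne.symm hu)
  -- membership facts for spectra
  have hmem1 : ∀ u w : V, G.Adj u w → c s(u, w) ∈ G.colorSpectrum c u :=
    fun u w h => ⟨w, h, rfl⟩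
  have hmem2 : ∀ u w : V, G.Adj u w → c s(u, w) ∈ G.colorSpectrum c w := by
    intro u w h
    exact ⟨u, h.symm, by rw [Sym2.eq_swap]⟩
  have hSne : ∀ v, (G.colorSpectrum c v).Nonempty := by
    intro v; obtain ⟨w, hw⟩ := hadj v; exact ⟨_, hmem1 v w hw⟩
  have hSsub : ∀ v, ∀ j ∈ G.colorSpectrum c v, 1 ≤ j ∧ j ≤ t := by
    intro v j hj
    obtain ⟨w, hw, rfl⟩ := hj
    have h := hrange s(v, w) (G.mem_edgeSet.mpr hw)
    rwa [Finset.mem_Icc] at h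
  have hBdd : ∀ v, BddAbove (G.colorSpectrum c v) :=
    fun v => ⟨t, fun j hj => (hSsub v j hj).2⟩
  -- maximum color at each vertex
  set b : V → ℕ := fun v => sSup (G.colorSpectrum c v) with hbdef
  have hbmem : ∀ v, b v ∈ G.colorSpectrum c v := fun v => Nat.sSup_mem (hSne v) (hBdd v)
  have hble : ∀ v, ∀ j ∈ G.colorSpectrum c v, j ≤ b v := fun v j hj => le_csSup (hBdd v) hj
  have hbt : ∀ v, b v ≤ t := fun v => (hSsub v _ (hbmem v)).2
  -- every used color is in some spectrum
  have hedge_spec : ∀ e, e ∈ G.edgeSet → ∃ z, c e ∈ G.colorSpectrum c z := by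
    intro e
    refine Sym2.ind (fun x y he => ⟨x, hmem1 x y (G.mem_edgeSet.mp he)⟩) e
  have hcol : ∀ i, 1 ≤ i → i ≤ t → ∃ z, i ∈ G.colorSpectrum c z := by
    intro i h1 h2
    obtain ⟨e, he, hce⟩ := hall i (Finset.mem_Icc.mpr ⟨h1, h2⟩)
    obtain ⟨z, hz⟩ := hedge_spec e he
    exact ⟨z, hce ▸ hz⟩
  -- walk crossing lemma
  have hwalkcross : ∀ (P : V → Prop) (x y : V), G.Walk x y → P x → ¬ P y →
      ∃ u w, G.Adj u w ∧ P u ∧ ¬ P w := by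
    intro P x y wk
    induction wk with
    | nil => intro h1 h2; exact absurd h1 h2
    | @cons xx yy zz h' p ih =>
      intro h1 h2
      by_cases hmid : P yy
      · exact ih hmid h2
      · exact ⟨xx, yy, h', h1, hmid⟩
  -- crossing lemma: each internal gap is crossed by some spectrum
  have hcross : ∀ m, 1 ≤ m → m < t →
      ∃ z, m ∈ G.colorSpectrum c z ∧ m + 1 ∈ G.colorSpectrum c z := by
    intro m hm1 hmt
    by_contra hno
    push_neg at hno
    have hdich : ∀ z, (∀ j ∈ G.colorSpectrum c z, j ≤ m) ∨
        (∀ j ∈ G.colorSpectrum c z, m + 1 ≤ j) := by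
      intro z
      by_cases hzl : ∀ j ∈ G.colorSpectrum c z, j ≤ m
      · exact Or.inl hzl
      · right
        push_neg at hzl
        obtain ⟨j', hj', hj'm⟩ := hzl
        intro j hj
        by_contra hjm
        push_neg at hjm
        have hmz : m ∈ G.colorSpectrum c z :=
          hinterval z j hj j' hj' m (by omega) (by omega)
        have hm1z : m + 1 ∈ G.colorSpectrum c z :=
          hinterval z j hj j' hj' (m + 1) (by omega) (by omega)
        exact hno z hmz hm1z
    obtain ⟨x, hx⟩ := hcol m hm1 (le_of_lt hmt)
    obtain ⟨y, hy⟩ := hcol (m + 1) (by omega) (by omega)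
    have hPx : ∀ j ∈ G.colorSpectrum c x, j ≤ m := by
      rcases hdich x with h | h
      · exact h
      · have := h m hx; omega
    have hPy : ¬ (∀ j ∈ G.colorSpectrum c y, j ≤ m) := by
      intro h; have := h (m + 1) hy; omega
    obtain ⟨wk⟩ := hconn.preconnected x y
    obtain ⟨u, w, huw, hu, hw⟩ :=
      hwalkcross (fun v => ∀ j ∈ G.colorSpectrum c v, j ≤ m) x y wk hPx hPy
    have hcu := hu _ (hmem1 u w huw)
    rcases hdich w with h | h
    · exact hw h
    · have := h _ (hmem2 u w huw); omega
  -- crossers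
  set Cr : ℕ → V → Prop :=
    fun m z => (m = 0 ∨ m ∈ G.colorSpectrum c z) ∧ (m + 1) ∈ G.colorSpectrum c z with hCrdef
  set Cf : ℕ → Finset V := fun m => Finset.univ.filter (fun z => Cr m z) with hCfdef
  set Zf : ℕ → Finset V := fun m => Finset.univ.filter (fun z => m < b z) with hZfdef
  have hCfmem : ∀ m z, z ∈ Cf m ↔ Cr m z := by
    intro m z; rw [hCfdef]; simp
  have hZfmem : ∀ m z, z ∈ Zf m ↔ m < b z := by
    intro m z; rw [hZfdef]; simp
  have hCrne : ∀ m, m < t → ∃ z, Cr m z := by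
    intro m hm
    rcases Nat.eq_zero_or_pos m with h0 | hpos
    · subst h0
      obtain ⟨z, hz⟩ := hcol 1 le_rfl ht1
      exact ⟨z, Or.inl rfl, hz⟩
    · obtain ⟨z, h1, h2⟩ := hcross m hpos hm
      exact ⟨z, Or.inr h1, h2⟩
  -- the greedy step lemma
  have hstep : ∀ m, m < t → ∃ u', Cr m u' ∧ (∀ z, Cr m z → b z ≤ b u') ∧
      m < b u' ∧
      b u' + 1 ≤ m + N ∧
      b u' + (Cf m).card + 1 + 2 * (Zf (b u')).card
        ≤ m + 2 * (Zf m).card + (Cf (b u')).card := by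
    intro m hm
    obtain ⟨z0, hz0⟩ := hCrne m hm
    have hCfne : (Cf m).Nonempty := ⟨z0, (hCfmem m z0).mpr hz0⟩
    obtain ⟨u', hu'mem, hu'max⟩ := Finset.exists_max_image (Cf m) b hCfne
    have hu'Cr : Cr m u' := (hCfmem m u').mp hu'mem
    have hmax : ∀ z, Cr m z → b z ≤ b u' := fun z hz => hu'max z ((hCfmem m z).mpr hz)
    have hm1S : m + 1 ∈ G.colorSpectrum c u' := hu'Cr.2
    have hmlt : m < b u' := by have := hble u' (m + 1) hm1S; omega
    -- every color in (m, b u'] is in the spectrum of u'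
    have hIoc : ∀ j ∈ Finset.Ioc m (b u'), j ∈ G.colorSpectrum c u' := by
      intro j hj
      rw [Finset.mem_Ioc] at hj
      exact hinterval u' (m + 1) hm1S (b u') (hbmem u') j (by omega) hj.2
    have hwit : ∀ j ∈ Finset.Ioc m (b u'), ∃ w, G.Adj u' w ∧ c s(u', w) = j :=
      fun j hj => hIoc j hj
    set f : ℕ → V := fun j => Classical.epsilon (fun w => G.Adj u' w ∧ c s(u', w) = j)
      with hfdef
    have hfspec : ∀ j ∈ Finset.Ioc m (b u'), G.Adj u' (f j) ∧ c s(u', f j) = j := by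
      intro j hj
      exact Classical.epsilon_spec (hwit j hj)
    set W : Finset V := (Finset.Ioc m (b u')).image f with hWdef
    have hinj : Set.InjOn f (Finset.Ioc m (b u')) := by
      intro j1 h1 j2 h2 he
      have e1 := (hfspec j1 h1).2
      have e2 := (hfspec j2 h2).2
      rw [← e1, ← e2, he]
    have hWcard : W.card = b u' - m := by
      rw [hWdef, Finset.card_image_of_injOn hinj, Nat.card_Ioc]
    have hWadj : ∀ x ∈ W, ∃ j, m < j ∧ j ≤ b u' ∧ G.Adj u' x ∧ j ∈ G.colorSpectrum c x := by
      intro x hx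
      rw [hWdef, Finset.mem_image] at hx
      obtain ⟨j, hj, rfl⟩ := hx
      obtain ⟨ha, hc⟩ := hfspec j hj
      rw [Finset.mem_Ioc] at hj
      have h2 := hmem2 u' (f j) ha
      rw [hc] at h2
      exact ⟨j, hj.1, hj.2, ha, h2⟩
    have hWnotu : ∀ x ∈ W, x ≠ u' := by
      intro x hx
      obtain ⟨j, _, _, ha, _⟩ := hWadj x hx
      exact ha.ne'
    have hWZ : ∀ x ∈ W, m < b x := by
      intro x hx
      obtain ⟨j, hj1, _, _, hjx⟩ := hWadj x hx
      have := hble x j hjx; omega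
    set D : Finset V := W.filter (fun x => b x ≤ b u') with hDdef
    set Sv : Finset V := W.filter (fun x => ¬ b x ≤ b u') with hSvdef
    have hDS : D.card + Sv.card = W.card := by
      rw [hDdef, hSvdef]
      exact Finset.card_filter_add_card_filter_not (fun x => b x ≤ b u')
    -- survivors cross the next gap
    have hSvC : Sv ⊆ Cf (b u') := by
      intro x hx
      rw [hSvdef, Finset.mem_filter] at hx
      obtain ⟨hxW, hxb⟩ := hx
      have hxb' : b u' < b x := by omega
      obtain ⟨j, hj1, hj2, _, hjx⟩ := hWadj x hxW
      have h1 : b u' ∈ G.colorSpectrum c x :=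
        hinterval x j hjx (b x) (hbmem x) (b u') hj2 (by omega)
      have h2 : b u' + 1 ∈ G.colorSpectrum c x :=
        hinterval x j hjx (b x) (hbmem x) (b u' + 1) (by omega) (by omega)
      exact (hCfmem (b u') x).mpr ⟨Or.inr h1, h2⟩
    set R : Finset V := Zf m \ Zf (b u') with hRdef
    have hRmem : ∀ z, z ∈ R ↔ (m < b z ∧ ¬ (b u' < b z)) := by
      intro z
      rw [hRdef, Finset.mem_sdiff]
      simp only [hZfmem]
    have hDR : D ⊆ R := by
      intro x hx
      rw [hDdef, Finset.mem_filter] at hx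
      rw [hRmem]
      exact ⟨hWZ x hx.1, by omega⟩
    have hCfR : Cf m ⊆ R := by
      intro z hz
      have hcr := (hCfmem m z).mp hz
      have h1 : m < b z := by have := hble z _ hcr.2; omega
      have h2 : b z ≤ b u' := hmax z hcr
      rw [hRmem]
      exact ⟨h1, by omega⟩
    have hu'D : u' ∉ D := by
      intro h
      exact hWnotu u' (Finset.mem_of_mem_filter u' h) rfl
    have hDCR : D.card + (Cf m).card + 1 ≤ 2 * R.card := by
      have h1 : (D ∪ Cf m).card ≤ R.card :=
        Finset.card_le_card (Finset.union_subset hDR hCfR)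
      have h2 : (Cf m).card ≤ R.card := Finset.card_le_card hCfR
      have h3 : (D ∪ Cf m).card + (D ∩ Cf m).card = D.card + (Cf m).card :=
        Finset.card_union_add_card_inter D (Cf m)
      have h4 : (D ∩ Cf m).card + 1 ≤ (Cf m).card := by
        have hsub : insert u' (D ∩ Cf m) ⊆ Cf m := by
          intro x hx
          rcases Finset.mem_insert.mp hx with rfl | hx
          · exact hu'mem
          · exact (Finset.mem_inter.mp hx).2
        have hcard := Finset.card_le_card hsub
        rwa [Finset.card_insert_of_notMem
          (fun hmem2' => hu'D (Finset.mem_inter.mp hmem2').1)] at hcard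
      omega
    have hRcard : R.card + (Zf (b u')).card = (Zf m).card := by
      rw [hRdef]
      apply Finset.card_sdiff_add_card_eq_card
      intro z hz
      rw [hZfmem] at hz ⊢
      omega
    have hSvcard : Sv.card ≤ (Cf (b u')).card := Finset.card_le_card hSvC
    have hWerase : W.card ≤ N - 1 := by
      have hsub : W ⊆ Finset.univ.erase u' := by
        intro x hx
        exact Finset.mem_erase.mpr ⟨hWnotu x hx, Finset.mem_univ x⟩
      have h := Finset.card_le_card hsub
      rwa [Finset.card_erase_of_mem (Finset.mem_univ u'), Finset.card_univ, ← hN] at h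
    refine ⟨u', hu'Cr, hmax, hmlt, by omega, by omega⟩
  -- main downward induction
  have hmain : ∀ d m, t - m ≤ d → m < t →
      t + (Cf m).card + 1 ≤ m + 2 * (Zf m).card := by
    intro d
    induction d with
    | zero => intro m h1 h2; omega
    | succ d ih =>
      intro m hd hm
      obtain ⟨u', _, _, hmlt, _, hineq⟩ := hstep m hm
      by_cases hlast : b u' < t
      · have IH := ih (b u') (by omega) hlast
        omega
      · have hbe : b u' = t := le_antisymm (hbt u') (by omega)
        have hZt : (Zf t).card = 0 := by
          rw [Finset.card_eq_zero]
          apply Finset.eq_empty_iff_forall_notMem.mpr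
          intro z hz
          rw [hZfmem] at hz
          have := hbt z; omega
        have hCt : (Cf t).card = 0 := by
          rw [Finset.card_eq_zero]
          apply Finset.eq_empty_iff_forall_notMem.mpr
          intro z hz
          have h := ((hCfmem t z).mp hz).2
          have := (hSsub z _ h).2
          omega
        rw [hbe] at hineq
        omega
  -- conclude
  obtain ⟨u0, hu0Cr, _, h0lt, h0N, h0ineq⟩ := hstep 0 (by omega)
  have hZ0 : (Zf 0).card ≤ N := by
    have h := Finset.card_le_univ (Zf 0)
    rwa [← hN] at h
  by_cases hone : b u0 < t
  · have hE1 := hmain (t - b u0) (b u0) le_rfl hone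
    have hC0 : 1 ≤ (Cf 0).card :=
      Finset.card_pos.mpr ⟨u0, (hCfmem 0 u0).mpr hu0Cr⟩
    omega
  · have hbe : b u0 = t := le_antisymm (hbt u0) (by omega)
    omega
end
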